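/- arXiv:1510.09068 — 4 statements merged into one kernel-verified Lean document; each statement's English description precedes it below -/
import Mathlib

section
/- Let A be a Banach algebra (a complete normed ring, not necessarily unital), and let J be a two-sided ideal of A whose closure is all of A. Then every idempotent p of A (an element with p·p = p) belongs to J. -/
/-- Geometric sequence `c, c*c, c*c*c, ...` in a (possibly non-unital) ring. -/
private def geomSeq {A : Type*} [Mul A] (c : A) : ℕ → A
  | 0 => c
  | n + 1 => c * geomSeq c n

private lemma geomSeq_norm_le {A : Type*} [NonUnitalNormedRing A] (c : A) :
    ∀ n, ‖geomSeq c n‖ ≤ ‖c‖ * ‖c‖ ^ n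
  | 0 => by simp [geomSeq]
  | n + 1 => by
    calc ‖c * geomSeq c n‖ ≤ ‖c‖ * ‖geomSeq c n‖ := norm_mul_le _ _
      _ ≤ ‖c‖ * (‖c‖ * ‖c‖ ^ n) := by
          exact mul_le_mul_of_nonneg_left (geomSeq_norm_le c n) (norm_nonneg c)
      _ = ‖c‖ * ‖c‖ ^ (n + 1) := by ring

private lemma geomSeq_p_mul {A : Type*} [NonUnitalRing A] {p c : A} (h : p * c = c) :
    ∀ n, p * geomSeq c n = geomSeq c n
  | 0 => h
  | n + 1 => by
    show p * (c * geomSeq c n) = c * geomSeq c n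
    rw [← mul_assoc, h]

/-- Every idempotent of a Banach algebra (complete, not necessarily
unital, normed ring) lies in any dense two-sided ideal. -/
theorem idempotent_mem_of_dense_twoSidedIdeal
    {A : Type*} [NonUnitalNormedRing A] [CompleteSpace A]
    (J : TwoSidedIdeal A) (hJ : closure (J : Set A) = Set.univ)
    (p : A) (hp : p * p = p) : p ∈ J := by
  have hpJ : p ∈ closure (J : Set A) := by rw [hJ]; trivial
  have hε : (0 : ℝ) < 1 / (‖p‖ * ‖p‖ + 1) := by positivity
  obtain ⟨q, hqJ, hq⟩ := Metric.mem_closure_iff.mp hpJ _ hε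
  set c := p * (p - q) * p with hc
  -- norm bound
  have hclt : ‖c‖ < 1 := by
    have h1 : ‖c‖ ≤ ‖p‖ * ‖p - q‖ * ‖p‖ :=
      le_trans (norm_mul_le _ _)
        (mul_le_mul_of_nonneg_right (norm_mul_le _ _) (norm_nonneg _))
    have h2 : ‖p - q‖ < 1 / (‖p‖ * ‖p‖ + 1) := by rwa [dist_eq_norm] at hq
    calc ‖c‖ ≤ ‖p‖ * ‖p - q‖ * ‖p‖ := h1
      _ = ‖p‖ * ‖p‖ * ‖p - q‖ := by ring
      _ ≤ (‖p‖ * ‖p‖ + 1) * ‖p - q‖ := by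
          apply mul_le_mul_of_nonneg_right _ (norm_nonneg _)
          linarith
      _ < (‖p‖ * ‖p‖ + 1) * (1 / (‖p‖ * ‖p‖ + 1)) := by
          apply mul_lt_mul_of_pos_left h2; positivity
      _ = 1 := by field_simp
  have hpc : p * c = c := by rw [hc, ← mul_assoc, ← mul_assoc, hp]
  have hcp : c * p = c := by rw [hc, mul_assoc, mul_assoc, hp, ← mul_assoc]
  -- summability of the geometric series
  have hsum : Summable (geomSeq c) := by
    refine Summable.of_norm_bounded ?_ (geomSeq_norm_le c)
    exact (summable_geometric_of_lt_one (norm_nonneg c) hclt).mul_left ‖c‖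
  set s := ∑' n, geomSeq c n with hs
  -- shift identity : c * s = s - c
  have hshift : c * s = s - c := by
    have h1 : c * s = ∑' n, c * geomSeq c n := (hsum.tsum_mul_left c).symm
    have h2 : (fun n => c * geomSeq c n) = fun n => geomSeq c (n + 1) := rfl
    have h3 : s = geomSeq c 0 + ∑' n, geomSeq c (n + 1) := Summable.tsum_eq_zero_add hsum
    rw [h1, h2]
    have : geomSeq c 0 = c := rfl
    rw [h3, this]
    abel
  have hps : p * s = s := by
    have h1 : p * s = ∑' n, p * geomSeq c n := (hsum.tsum_mul_left p).symm
    rw [h1]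
    exact congrArg (fun f : ℕ → A => ∑' n, f n) (funext (geomSeq_p_mul hpc))
  -- the key algebraic identity : (p - c) * (p + s) = p
  have hkey : (p - c) * (p + s) = p := by
    have : (p - c) * (p + s) = p * p + p * s - c * p - c * s := by
      simp only [sub_mul, mul_add]; abel
    rw [this, hp, hps, hcp, hshift]; abel
  -- p - c = p * q * p ∈ J
  have hb : p - c = p * q * p := by
    rw [hc]
    have : p * (p - q) * p = p * p * p - p * q * p := by
      simp only [mul_sub, sub_mul]
    rw [this, hp, hp]; abel
  have hbJ : p - c ∈ J := by
    rw [hb]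
    exact J.mul_mem_right _ _ (J.mul_mem_left _ _ hqJ)
  rw [← hkey]
  exact J.mul_mem_right _ _ hbJ
end

section
/- Let G be a unimodular locally compact group with Haar measure μ, and let π be an irreducible continuous unitary representation of G with formal dimension k > 0. Suppose ξ is a nonzero vector in H_π such that the coefficient function π_{ξ,ξ}(x) = ⟨π(x)ξ, ξ⟩ is μ-integrable. Then p := (k/‖ξ‖²)·π_{ξ,ξ} is a strongly minimal projection in L¹(G): p ⋆ p = p and p^* = p, and for every f ∈ L¹(G) there is a scalar α_f ∈ ℂ with p ⋆ f ⋆ p = α_f p μ-a.e. -/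
open MeasureTheory
open scoped InnerProductSpace

/-- Convolution of complex-valued functions on a group, with respect to a measure `μ`:
`(f ⋆ g)(x) = ∫ f(y) g(y⁻¹ x) dμ(y)`. -/
noncomputable def conv {G : Type*} [Group G] [MeasurableSpace G]
    (μ : Measure G) (f g : G → ℂ) : G → ℂ :=
  fun x => ∫ y, f y * g (y⁻¹ * x) ∂μ

/-- Let `π` be an irreducible continuous unitary representation of a
unimodular locally compact group `G` with formal dimension `k > 0` (Schur orthogonality).
If `ξ ≠ 0` has integrable coefficient function `π_{ξ,ξ}`, then
`p = (k/‖ξ‖²) π_{ξ,ξ}` is a strongly minimal projection in `L¹(G)`.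
(The paper's coefficient `π_{ξ,η}(x) = ⟨π(x)ξ, η⟩`, linear in the first slot, is
`⟪η, π x ξ⟫_ℂ` in Mathlib's convention.) -/
theorem scaled_integrable_coefficient_is_stronglyMinimal_projection
    {G : Type*} [Group G] [TopologicalSpace G] [IsTopologicalGroup G]
    [LocallyCompactSpace G] [MeasurableSpace G] [BorelSpace G]
    (μ : Measure G) [μ.IsHaarMeasure] [μ.IsMulRightInvariant]
    {H : Type*} [NormedAddCommGroup H] [InnerProductSpace ℂ H] [CompleteSpace H]
    (π : G → H →L[ℂ] H)
    (hone : π 1 = 1)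
    (hmul : ∀ g h : G, π (g * h) = (π g).comp (π h))
    (hunitary : ∀ (g : G) (ζ η : H), ⟪π g ζ, π g η⟫_ℂ = ⟪ζ, η⟫_ℂ)
    (hcont : ∀ ζ : H, Continuous fun g => π g ζ)
    (hirr : ∀ V : Submodule ℂ H, IsClosed (V : Set H) →
      (∀ g : G, ∀ ζ ∈ V, π g ζ ∈ V) → V = ⊥ ∨ V = ⊤)
    (k : ℝ) (hk : 0 < k)
    (hsq : ∀ ζ η : H, MemLp (fun x => ⟪η, π x ζ⟫_ℂ) 2 μ)
    (horth : ∀ ζ ζ' η η' : H,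
      ∫ x, ⟪η, π x ζ⟫_ℂ * (starRingEnd ℂ) ⟪η', π x ζ'⟫_ℂ ∂μ =
        ((k : ℂ))⁻¹ * ⟪ζ', ζ⟫_ℂ * ⟪η, η'⟫_ℂ)
    (ξ : H) (hξ : ξ ≠ 0)
    (hint : Integrable (fun x => ⟪ξ, π x ξ⟫_ℂ) μ)
    (p : G → ℂ) (hpdef : p = fun x => ((k / ‖ξ‖ ^ 2 : ℝ) : ℂ) * ⟪ξ, π x ξ⟫_ℂ) :
    Integrable p μ ∧
    conv μ p p =ᵐ[μ] p ∧
    (fun x => (starRingEnd ℂ) (p x⁻¹)) =ᵐ[μ] p ∧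
    ∀ f : G → ℂ, Integrable f μ →
      ∃ α : ℂ, conv μ (conv μ p f) p =ᵐ[μ] fun x => α * p x := by
  classical
  have hξnorm : (0:ℝ) < ‖ξ‖ := norm_pos_iff.mpr hξ
  set c : ℂ := ((k / ‖ξ‖ ^ 2 : ℝ) : ℂ) with hcdef
  -- basic representation identities
  have happ : ∀ (g h : G) (v : H), π g (π h v) = π (g * h) v := by
    intro g h v; rw [hmul]; rfl
  have hid : ∀ v : H, π 1 v = v := by intro v; rw [hone]; rfl
  have hadj : ∀ (g : G) (a b : H), ⟪a, π g b⟫_ℂ = ⟪π g⁻¹ a, b⟫_ℂ := by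
    intro g a b
    conv_lhs => rw [← hunitary g⁻¹ a (π g b)]
    rw [happ, inv_mul_cancel, hid]
  have hadj2 : ∀ (g : G) (a b : H), ⟪π g a, b⟫_ℂ = ⟪a, π g⁻¹ b⟫_ℂ := by
    intro g a b
    calc ⟪π g a, b⟫_ℂ = (starRingEnd ℂ) ⟪b, π g a⟫_ℂ := (inner_conj_symm _ _).symm
      _ = (starRingEnd ℂ) ⟪π g⁻¹ b, a⟫_ℂ := by rw [hadj]
      _ = ⟪a, π g⁻¹ b⟫_ℂ := inner_conj_symm _ _
  have hshift : ∀ (y x : G) (a b : H), ⟪a, π (y⁻¹ * x) b⟫_ℂ = ⟪π y a, π x b⟫_ℂ := by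
    intro y x a b
    rw [← hunitary y a (π (y⁻¹ * x) b), happ, mul_inv_cancel_left]
  have hnormπ : ∀ (g : G) (v : H), ‖π g v‖ = ‖v‖ := by
    intro g v
    have h2 := hunitary g v v
    rw [inner_self_eq_norm_sq_to_K, inner_self_eq_norm_sq_to_K] at h2
    have h3 : ‖π g v‖ ^ 2 = ‖v‖ ^ 2 := by exact_mod_cast h2
    have h4 := congrArg Real.sqrt h3
    rwa [Real.sqrt_sq (norm_nonneg _), Real.sqrt_sq (norm_nonneg _)] at h4
  have hφcont : Continuous fun u : G => ⟪ξ, π u ξ⟫_ℂ :=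
    Continuous.inner continuous_const (hcont ξ)
  have hpcont : Continuous p := by rw [hpdef]; exact continuous_const.mul hφcont
  have hpint : Integrable p μ := by rw [hpdef]; exact hint.const_mul _
  have hpx : ∀ u, p u = c * ⟪ξ, π u ξ⟫_ℂ := fun u => by rw [hpdef]
  have hcconj : (starRingEnd ℂ) c = c := Complex.conj_ofReal _
  have hsymm : ∀ u : G, p u⁻¹ = (starRingEnd ℂ) (p u) := by
    intro u
    rw [hpx, hpx, map_mul, hcconj, hadj, inv_inv, ← inner_conj_symm ξ (π u ξ),
      Complex.conj_conj]
  have hkne : (k:ℂ) ≠ 0 := by exact_mod_cast hk.ne'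
  have hξC : ((‖ξ‖ : ℝ) : ℂ) ≠ 0 := by exact_mod_cast hξnorm.ne'
  -- Part 2: p ⋆ p = p, pointwise
  have hconvpp : conv μ p p = p := by
    funext x
    show ∫ y, p y * p (y⁻¹ * x) ∂μ = p x
    have key : ∀ y, p y * p (y⁻¹ * x)
        = c * (c * (⟪ξ, π y ξ⟫_ℂ * (starRingEnd ℂ) ⟪π x ξ, π y ξ⟫_ℂ)) := by
      intro y
      rw [hpx, hpx, hshift y x ξ ξ, ← inner_conj_symm (π y ξ) (π x ξ)]
      ring
    simp_rw [key]
    rw [integral_const_mul, integral_const_mul, horth ξ ξ ξ (π x ξ), hpx,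
      inner_self_eq_norm_sq_to_K]
    rw [hcdef]
    push_cast
    field_simp
    rfl
  -- Part 3
  have hstar : ∀ x : G, (starRingEnd ℂ) (p x⁻¹) = p x := by
    intro x; rw [hsymm]; exact Complex.conj_conj _
  refine ⟨hpint, Filter.EventuallyEq.of_eq hconvpp,
    Filter.Eventually.of_forall hstar, ?_⟩
  -- Part 4
  intro f hf
  -- the support structure of p
  set Un : ℕ → Set G := fun n => {y | 1 / ((n : ℝ) + 1) < ‖p y‖} with hUndef
  set U : Set G := ⋃ n, Un n with hUdef
  have hUnopen : ∀ n, IsOpen (Un n) := fun n => isOpen_lt continuous_const hpcont.norm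
  have hUopen : IsOpen U := isOpen_iUnion hUnopen
  have hUnfin : ∀ n, μ (Un n) < ⊤ := by
    intro n
    have h1 : (0:ℝ) < 1 / ((n : ℝ) + 1) := by positivity
    refine lt_of_le_of_lt (measure_mono ?_) (hpint.measure_norm_ge_lt_top h1)
    intro y hy
    exact le_of_lt (show 1 / ((n : ℝ) + 1) < ‖p y‖ from hy)
  have hUvan : ∀ y, y ∉ U → p y = 0 := by
    intro y hy
    by_contra hpy
    obtain ⟨n, hn⟩ := exists_nat_one_div_lt (norm_pos_iff.mpr hpy)
    exact hy (Set.mem_iUnion.mpr ⟨n, hn⟩)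
  -- μ.inv is a Haar measure
  haveI : μ.inv.IsHaarMeasure :=
    { toIsFiniteMeasureOnCompacts := inferInstance
      toIsMulLeftInvariant := inferInstance
      toIsOpenPosMeasure := inferInstance }
  -- μ.inv agrees with μ on open sets
  have hinvopen : ∀ O : Set G, IsOpen O → μ.inv O = μ O := by
    obtain ⟨K⟩ : Nonempty (TopologicalSpace.PositiveCompacts G) := inferInstance
    set c0 : NNReal := Measure.haarScalarFactor μ.inv μ with hc0
    have hO : ∀ O : Set G, IsOpen O → μ.inv O = c0 • μ O := fun O hO =>
      Measure.measure_isHaarMeasure_eq_smul_of_isOpen μ.inv μ hO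
    set O₀ : Set G := interior (K : Set G) with hO₀
    have hO₀open : IsOpen O₀ := isOpen_interior
    have hne : μ O₀ ≠ 0 := (hO₀open.measure_pos μ K.interior_nonempty).ne'
    have hfin : μ O₀ ≠ ⊤ :=
      (lt_of_le_of_lt (measure_mono interior_subset) K.isCompact.measure_lt_top).ne
    have e1 : μ O₀⁻¹ = (c0 : ENNReal) * μ O₀ := by
      have := hO O₀ hO₀open
      rwa [Measure.inv_apply, ENNReal.smul_def, smul_eq_mul] at this
    have e2 : μ O₀ = (c0 : ENNReal) * μ O₀⁻¹ := by
      have := hO O₀⁻¹ hO₀open.inv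
      rwa [Measure.inv_apply, inv_inv, ENNReal.smul_def, smul_eq_mul] at this
    have e3 : ((c0 : ENNReal) * c0) * μ O₀ = 1 * μ O₀ := by
      rw [one_mul, mul_assoc, ← e1, ← e2]
    have hcc : (c0 : ENNReal) * c0 = 1 := (ENNReal.mul_left_inj hne hfin).mp e3
    have hc01 : c0 = 1 := by
      have h5 : (c0 : ℝ) * (c0 : ℝ) = 1 := by
        have := congrArg ENNReal.toReal hcc
        simpa [ENNReal.toReal_mul] using this
      have h6 : (0:ℝ) ≤ (c0 : ℝ) := c0.coe_nonneg
      have h7 : (c0 : ℝ) = 1 := by nlinarith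
      exact NNReal.coe_injective (by simpa using h7)
    intro O hOopen
    rw [hO O hOopen, hc01, one_smul]
  -- μ.inv agrees with μ on subsets of finite-measure open sets
  have hrestr : ∀ O : Set G, IsOpen O → μ O ≠ ⊤ → μ.inv.restrict O = μ.restrict O := by
    intro O hOopen hOfin
    haveI : IsFiniteMeasure (μ.restrict O) :=
      ⟨by rw [Measure.restrict_apply_univ]; exact hOfin.lt_top⟩
    haveI : IsFiniteMeasure (μ.inv.restrict O) :=
      ⟨by rw [Measure.restrict_apply_univ, hinvopen O hOopen]; exact hOfin.lt_top⟩
    refine ext_of_generate_finite {s : Set G | IsOpen s} ?_ isPiSystem_isOpen ?_ ?_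
    · exact BorelSpace.measurable_eq
    · intro s hs
      rw [Measure.restrict_apply' hOopen.measurableSet,
        Measure.restrict_apply' hOopen.measurableSet, hinvopen _ (hs.inter hOopen)]
    · rw [Measure.restrict_apply_univ, Measure.restrict_apply_univ, hinvopen O hOopen]
  -- hence they agree on subsets of U
  have hUrestr : μ.inv.restrict U = μ.restrict U := by
    have hUnmono : Monotone Un := by
      intro a b hab y hy
      have hle : 1 / ((b : ℝ) + 1) ≤ 1 / ((a : ℝ) + 1) := by
        apply one_div_le_one_div_of_le
        · positivity
        · exact_mod_cast Nat.succ_le_succ hab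
      exact lt_of_le_of_lt hle hy
    refine Measure.ext fun s hs => ?_
    rw [Measure.restrict_apply hs, Measure.restrict_apply hs, hUdef,
      Set.inter_iUnion]
    have hmono : Monotone fun n => s ∩ Un n := fun a b hab =>
      Set.inter_subset_inter_right s (hUnmono hab)
    rw [Monotone.measure_iUnion hmono, Monotone.measure_iUnion hmono]
    refine iSup_congr fun n => ?_
    rw [← Measure.restrict_apply' (hUnopen n).measurableSet,
      ← Measure.restrict_apply' (hUnopen n).measurableSet,
      hrestr (Un n) (hUnopen n) (hUnfin n).ne]
  -- integral transport under inversion for U-supported integrands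
  have hkey : ∀ h : G → ℂ, (∀ y, y ∉ U → h y = 0) → AEStronglyMeasurable h μ.inv →
      (∫ y, h y ∂μ) = ∫ y, h y⁻¹ ∂μ := by
    intro h hvan hm
    have e1 : (∫ y, h y ∂μ) = ∫ y in U, h y ∂μ :=
      (setIntegral_eq_integral_of_forall_compl_eq_zero fun y hy => hvan y hy).symm
    have e1b : (∫ y in U, h y ∂μ) = ∫ y in U, h y ∂μ.inv := by rw [hUrestr]
    have e2 : (∫ y in U, h y ∂μ.inv) = ∫ y, h y ∂μ.inv :=
      setIntegral_eq_integral_of_forall_compl_eq_zero fun y hy => hvan y hy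
    have e3 : (∫ y, h y ∂μ.inv) = ∫ y, h y⁻¹ ∂μ := by
      rw [Measure.inv_def]
      exact integral_map measurable_inv.aemeasurable (by rwa [← Measure.inv_def])
    rw [e1, e1b, e2, e3]
  -- the auxiliary vector η, via the Riesz representation theorem
  have hbound1 : ∀ v : H, ∀ w : G,
      ‖(starRingEnd ℂ) (f w) * ⟪π w⁻¹ ξ, v⟫_ℂ‖ ≤ ‖f w‖ * (‖ξ‖ * ‖v‖) := by
    intro v w
    rw [norm_mul, RCLike.norm_conj]
    calc ‖f w‖ * ‖⟪π w⁻¹ ξ, v⟫_ℂ‖ ≤ ‖f w‖ * (‖π w⁻¹ ξ‖ * ‖v‖) :=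
          mul_le_mul_of_nonneg_left (norm_inner_le_norm _ _) (norm_nonneg _)
      _ = ‖f w‖ * (‖ξ‖ * ‖v‖) := by rw [hnormπ]
  have hint1 : ∀ v : H, Integrable (fun w => (starRingEnd ℂ) (f w) * ⟪π w⁻¹ ξ, v⟫_ℂ) μ := by
    intro v
    have hm : AEStronglyMeasurable (fun w => (starRingEnd ℂ) (f w) * ⟪π w⁻¹ ξ, v⟫_ℂ) μ := by
      refine (Complex.continuous_conj.comp_aestronglyMeasurable hf.1).mul ?_
      exact (Continuous.inner ((hcont ξ).comp continuous_inv) continuous_const).aestronglyMeasurable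
    exact (hf.norm.mul_const (‖ξ‖ * ‖v‖)).mono' hm
      (Filter.Eventually.of_forall fun w => hbound1 v w)
  have hψlin : ∃ ψ : H →ₗ[ℂ] ℂ, ∀ v : H,
      ψ v = ∫ w, (starRingEnd ℂ) (f w) * ⟪π w⁻¹ ξ, v⟫_ℂ ∂μ := by
    refine ⟨{ toFun := fun v => ∫ w, (starRingEnd ℂ) (f w) * ⟪π w⁻¹ ξ, v⟫_ℂ ∂μ
              map_add' := ?_
              map_smul' := ?_ }, fun v => rfl⟩
    · intro a b
      simp_rw [inner_add_right, mul_add]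
      exact integral_add (hint1 a) (hint1 b)
    · intro r a
      simp only [RingHom.id_apply, smul_eq_mul]
      rw [← integral_const_mul]
      congr 1
      funext w
      rw [inner_smul_right]
      ring
  obtain ⟨ψlin, hψlin⟩ := hψlin
  have hψcont : ∃ ψ : H →L[ℂ] ℂ, ∀ v : H,
      ψ v = ∫ w, (starRingEnd ℂ) (f w) * ⟪π w⁻¹ ξ, v⟫_ℂ ∂μ := by
    refine ⟨LinearMap.mkContinuous ψlin ((∫ w, ‖f w‖ ∂μ) * ‖ξ‖) fun v => ?_, fun v => hψlin v⟩
    rw [hψlin]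
    calc ‖∫ w, (starRingEnd ℂ) (f w) * ⟪π w⁻¹ ξ, v⟫_ℂ ∂μ‖
        ≤ ∫ w, ‖(starRingEnd ℂ) (f w) * ⟪π w⁻¹ ξ, v⟫_ℂ‖ ∂μ := norm_integral_le_integral_norm _
      _ ≤ ∫ w, ‖f w‖ * (‖ξ‖ * ‖v‖) ∂μ := by
          refine integral_mono (hint1 v).norm (hf.norm.mul_const _) ?_
          intro w
          exact hbound1 v w
      _ = (∫ w, ‖f w‖ ∂μ) * ‖ξ‖ * ‖v‖ := by
          rw [MeasureTheory.integral_mul_const, mul_assoc]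
  obtain ⟨ψ, hψ⟩ := hψcont
  set η : H := (InnerProductSpace.toDual ℂ H).symm ψ with hηdef
  have hηinner : ∀ v : H, ⟪η, v⟫_ℂ = ∫ w, (starRingEnd ℂ) (f w) * ⟪π w⁻¹ ξ, v⟫_ℂ ∂μ := by
    intro v
    rw [hηdef, InnerProductSpace.toDual_symm_apply, hψ]
  have hηpair : ∀ u : H, (∫ w, f w * ⟪u, π w⁻¹ ξ⟫_ℂ ∂μ) = ⟪u, η⟫_ℂ := by
    intro u
    have h1 : ∀ w, f w * ⟪u, π w⁻¹ ξ⟫_ℂ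
        = (starRingEnd ℂ) ((starRingEnd ℂ) (f w) * ⟪π w⁻¹ ξ, u⟫_ℂ) := by
      intro w
      rw [map_mul, Complex.conj_conj, inner_conj_symm]
    simp_rw [h1]
    rw [integral_conj, ← hηinner u, inner_conj_symm]
  -- pointwise formula for conv μ p f
  have hq : ∀ z : G, conv μ p f z = c * ⟪ξ, π z η⟫_ℂ := by
    intro z
    have mp1 : MeasurePreserving (fun y : G => y⁻¹) μ.inv μ :=
      ⟨measurable_inv, by rw [← Measure.inv_def]; exact Measure.inv_inv μ⟩
    have mp2 : MeasurePreserving (fun u : G => u * z) μ μ :=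
      measurePreserving_mul_right μ z
    have mp : MeasurePreserving (fun y : G => y⁻¹ * z) μ.inv μ := mp2.comp mp1
    have hmz : AEStronglyMeasurable (fun y => p y * f (y⁻¹ * z)) μ.inv :=
      (hpcont.aestronglyMeasurable).mul
        (hf.1.comp_quasiMeasurePreserving mp.quasiMeasurePreserving)
    have e1 : (∫ y, p y * f (y⁻¹ * z) ∂μ) = ∫ y, p y⁻¹ * f ((y⁻¹)⁻¹ * z) ∂μ :=
      hkey _ (fun y hy => by rw [hUvan y hy, zero_mul]) hmz
    have e2 : (∫ y, p y⁻¹ * f ((y⁻¹)⁻¹ * z) ∂μ) = ∫ y, p y⁻¹ * f (y * z) ∂μ := by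
      simp only [inv_inv]
    have e3 : (∫ y, p (z * y⁻¹) * f y ∂μ) = ∫ y, p y⁻¹ * f (y * z) ∂μ := by
      have h0 := integral_mul_right_eq_self (μ := μ) (fun y => p y⁻¹ * f (y * z)) z⁻¹
      simpa [mul_inv_rev, inv_inv, inv_mul_cancel_right] using h0
    have e4 : ∀ y, p (z * y⁻¹) * f y = c * (f y * ⟪π z⁻¹ ξ, π y⁻¹ ξ⟫_ℂ) := by
      intro y
      rw [hpx, hadj (z * y⁻¹) ξ ξ, mul_inv_rev, inv_inv, ← happ y z⁻¹ ξ, hadj2 y]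
      ring
    calc conv μ p f z = ∫ y, p y * f (y⁻¹ * z) ∂μ := rfl
      _ = ∫ y, p y⁻¹ * f (y * z) ∂μ := by rw [e1, e2]
      _ = ∫ y, p (z * y⁻¹) * f y ∂μ := e3.symm
      _ = ∫ y, c * (f y * ⟪π z⁻¹ ξ, π y⁻¹ ξ⟫_ℂ) ∂μ := by simp_rw [e4]
      _ = c * ⟪π z⁻¹ ξ, η⟫_ℂ := by rw [integral_const_mul, hηpair (π z⁻¹ ξ)]
      _ = c * ⟪ξ, π z η⟫_ℂ := by rw [hadj2 z⁻¹, inv_inv]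
  -- conclusion
  refine ⟨c * (k:ℂ)⁻¹ * ⟪ξ, η⟫_ℂ, Filter.Eventually.of_forall fun x => ?_⟩
  show (∫ z, conv μ p f z * p (z⁻¹ * x) ∂μ) = c * (k:ℂ)⁻¹ * ⟪ξ, η⟫_ℂ * p x
  have e5 : ∀ z, conv μ p f z * p (z⁻¹ * x)
      = c * (c * (⟪ξ, π z η⟫_ℂ * (starRingEnd ℂ) ⟪π x ξ, π z ξ⟫_ℂ)) := by
    intro z
    rw [hq z, hpx, hshift z x ξ ξ, ← inner_conj_symm (π z ξ) (π x ξ)]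
    ring
  simp_rw [e5]
  rw [integral_const_mul, integral_const_mul, horth η ξ ξ (π x ξ), hpx]
  ring
end

section
/- Let G be a unimodular locally compact group with Haar measure μ, and let π be an irreducible continuous unitary representation of G with formal dimension k > 0. Then for all vectors ξ, η, ξ', η' ∈ H_π and every x ∈ G, the convolution integral (π_{ξ,η} ⋆ π_{ξ',η'})(x) = ∫_G π_{ξ,η}(y)·π_{ξ',η'}(y⁻¹x) dμ(y) converges absolutely and equals k⁻¹ ⟨ξ, η'⟩ · π_{ξ',η}(x). -/
open MeasureTheory
open scoped InnerProductSpace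

/-- Let `π` be an irreducible continuous unitary representation of a
unimodular locally compact group `G` with formal dimension `k > 0` (Schur orthogonality).
Then for all `ξ, η, ξ', η'` and every `x`, the convolution integral
`(π_{ξ,η} ⋆ π_{ξ',η'})(x)` converges absolutely, and equals `k⁻¹ ⟨ξ, η'⟩ π_{ξ',η}(x)`.
(The paper's coefficient `π_{ξ,η}(x) = ⟨π(x)ξ, η⟩`, linear in the first slot, is
`⟪η, π x ξ⟫_ℂ` in Mathlib's convention; so `⟨ξ, η'⟩ = ⟪η', ξ⟫_ℂ`.) -/
theorem coefficient_convolution_formula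
    {G : Type*} [Group G] [TopologicalSpace G] [IsTopologicalGroup G]
    [LocallyCompactSpace G] [MeasurableSpace G] [BorelSpace G]
    (μ : Measure G) [μ.IsHaarMeasure] [μ.IsMulRightInvariant]
    {H : Type*} [NormedAddCommGroup H] [InnerProductSpace ℂ H] [CompleteSpace H]
    (π : G → H →L[ℂ] H)
    (hone : π 1 = 1)
    (hmul : ∀ g h : G, π (g * h) = (π g).comp (π h))
    (hunitary : ∀ (g : G) (ζ θ : H), ⟪π g ζ, π g θ⟫_ℂ = ⟪ζ, θ⟫_ℂ)
    (hcont : ∀ ζ : H, Continuous fun g => π g ζ)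
    (hirr : ∀ V : Submodule ℂ H, IsClosed (V : Set H) →
      (∀ g : G, ∀ ζ ∈ V, π g ζ ∈ V) → V = ⊥ ∨ V = ⊤)
    (k : ℝ) (hk : 0 < k)
    (hsq : ∀ ζ θ : H, MemLp (fun x => ⟪θ, π x ζ⟫_ℂ) 2 μ)
    (horth : ∀ ζ ζ' θ θ' : H,
      ∫ x, ⟪θ, π x ζ⟫_ℂ * (starRingEnd ℂ) ⟪θ', π x ζ'⟫_ℂ ∂μ =
        ((k : ℂ))⁻¹ * ⟪ζ', ζ⟫_ℂ * ⟪θ, θ'⟫_ℂ)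
    (ξ η ξ' η' : H) (x : G) :
    Integrable (fun y => ⟪η, π y ξ⟫_ℂ * ⟪η', π (y⁻¹ * x) ξ'⟫_ℂ) μ ∧
    ∫ y, ⟪η, π y ξ⟫_ℂ * ⟪η', π (y⁻¹ * x) ξ'⟫_ℂ ∂μ =
      ((k : ℂ))⁻¹ * ⟪η', ξ⟫_ℂ * ⟪η, π x ξ'⟫_ℂ := by
  have hinv : ∀ (g : G) (w : H), π g (π g⁻¹ w) = w := by
    intro g w
    have h := hmul g g⁻¹
    rw [mul_inv_cancel, hone] at h
    have : (1 : H →L[ℂ] H) w = ((π g).comp (π g⁻¹)) w := by rw [h]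
    simpa using this.symm
  have key : ∀ y : G, ⟪η', π (y⁻¹ * x) ξ'⟫_ℂ = (starRingEnd ℂ) ⟪π x ξ', π y η'⟫_ℂ := by
    intro y
    have h1 : π (y⁻¹ * x) ξ' = π y⁻¹ (π x ξ') := by rw [hmul]; rfl
    have h2 : ⟪π y η', π y (π y⁻¹ (π x ξ'))⟫_ℂ = ⟪η', π y⁻¹ (π x ξ')⟫_ℂ := hunitary y η' _
    rw [hinv] at h2
    rw [h1, ← h2, ← inner_conj_symm]
  have heq : (fun y => ⟪η, π y ξ⟫_ℂ * ⟪η', π (y⁻¹ * x) ξ'⟫_ℂ)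
      = fun y => ⟪η, π y ξ⟫_ℂ * (starRingEnd ℂ) ⟪π x ξ', π y η'⟫_ℂ := by
    funext y; rw [key]
  constructor
  · rw [heq]
    have h := hsq η' (π x ξ')
    have hmeas : AEStronglyMeasurable (fun y => (starRingEnd ℂ) ⟪π x ξ', π y η'⟫_ℂ) μ :=
      continuous_star.comp_aestronglyMeasurable h.1
    have hconj : MemLp (fun y => (starRingEnd ℂ) ⟪π x ξ', π y η'⟫_ℂ) 2 μ :=
      h.of_le hmeas (Filter.Eventually.of_forall fun y => by
        rw [starRingEnd_apply, norm_star])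
    have hsmul := hconj.smul (hsq ξ η) (r := 1)
    rw [← memLp_one_iff_integrable]
    have : ((fun y => ⟪η, π y ξ⟫_ℂ) • fun y => (starRingEnd ℂ) ⟪π x ξ', π y η'⟫_ℂ)
        = fun y => ⟪η, π y ξ⟫_ℂ * (starRingEnd ℂ) ⟪π x ξ', π y η'⟫_ℂ := rfl
    rwa [this] at hsmul
  · rw [heq, horth]
end

section
/- Let G be a unimodular locally compact group with Haar measure μ. Let π₁, …, πₙ be pairwise inequivalent irreducible continuous unitary representations of G, each π_i having formal dimension k_i > 0, let σ = ⊕_{i=1}^n π_i act on H = ⊕_{i=1}^n H_i, and set k_σ = min{k₁, …, kₙ}. Suppose u : G → ℂ satisfies u(x) = Σ_j ⟨σ(x)ξ_j, η_j⟩ for all x ∈ G, where (ξ_j), (η_j) are sequences in H with C := Σ_j ‖ξ_j‖·‖η_j‖ < ∞. Then u ∈ L²(G, μ) and √(k_σ)·‖u‖₂ ≤ C. -/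
open MeasureTheory
open scoped InnerProductSpace

private lemma cs_aux {n : ℕ} {H : Fin n → Type*} [∀ i, NormedAddCommGroup (H i)]
    (v w : PiLp 2 H) : ∑ i, ‖v i‖ * ‖w i‖ ≤ ‖v‖ * ‖w‖ := by
  set a : EuclideanSpace ℝ (Fin n) := (WithLp.equiv 2 _).symm fun i => ‖v i‖ with ha
  set b : EuclideanSpace ℝ (Fin n) := (WithLp.equiv 2 _).symm fun i => ‖w i‖ with hb
  have h1 : ⟪a, b⟫_ℝ = ∑ i, ‖v i‖ * ‖w i‖ := by
    simp [ha, hb, PiLp.inner_apply, RCLike.inner_apply, WithLp.equiv_symm_apply]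
    exact Finset.sum_congr rfl fun _ _ => mul_comm _ _
  have h2 : ‖a‖ = ‖v‖ := by
    rw [PiLp.norm_eq_of_L2, PiLp.norm_eq_of_L2]
    congr 1
    refine Finset.sum_congr rfl fun i _ => ?_
    simp [ha, WithLp.equiv_symm_apply, Real.norm_of_nonneg (norm_nonneg _)]
  have h3 : ‖b‖ = ‖w‖ := by
    rw [PiLp.norm_eq_of_L2, PiLp.norm_eq_of_L2]
    congr 1
    refine Finset.sum_congr rfl fun i _ => ?_
    simp [hb, WithLp.equiv_symm_apply, Real.norm_of_nonneg (norm_nonneg _)]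
  calc ∑ i, ‖v i‖ * ‖w i‖ = ⟪a, b⟫_ℝ := h1.symm
    _ ≤ ‖a‖ * ‖b‖ := real_inner_le_norm a b
    _ = ‖v‖ * ‖w‖ := by rw [h2, h3]

/-- Let `π₁,…,πₙ` be pairwise inequivalent irreducible continuous
unitary representations of a unimodular locally compact group `G`, each with formal
dimension `k i > 0`, `σ = ⊕ πᵢ` acting on the Hilbert direct sum `PiLp 2 H`, and
`kσ = min kᵢ`.  If `u(x) = Σ_j ⟨σ(x)ξⱼ, ηⱼ⟩` with `C = Σ_j ‖ξⱼ‖‖ηⱼ‖ < ∞`, then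
`u ∈ L²(G)` and `√kσ ‖u‖₂ ≤ C`.
(The paper's pairing `⟨σ(x)ξ, η⟩`, linear in the first slot, is
`∑ i, ⟪η i, π i x (ξ i)⟫_ℂ` in Mathlib's convention.) -/
theorem Asigma_subset_L2
    {G : Type*} [Group G] [TopologicalSpace G] [IsTopologicalGroup G]
    [LocallyCompactSpace G] [MeasurableSpace G] [BorelSpace G]
    (μ : Measure G) [μ.IsHaarMeasure] [μ.IsMulRightInvariant]
    {n : ℕ} (hn : 0 < n) {H : Fin n → Type*}
    [∀ i, NormedAddCommGroup (H i)] [∀ i, InnerProductSpace ℂ (H i)]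
    [∀ i, CompleteSpace (H i)]
    (π : ∀ i, G → (H i →L[ℂ] H i))
    (hone : ∀ i, π i 1 = 1)
    (hmul : ∀ i, ∀ g h : G, π i (g * h) = (π i g).comp (π i h))
    (hunitary : ∀ i, ∀ (g : G) (ζ θ : H i), ⟪π i g ζ, π i g θ⟫_ℂ = ⟪ζ, θ⟫_ℂ)
    (hcont : ∀ i, ∀ ζ : H i, Continuous fun g => π i g ζ)
    (hirr : ∀ i, ∀ V : Submodule ℂ (H i), IsClosed (V : Set (H i)) →
      (∀ g : G, ∀ ζ ∈ V, π i g ζ ∈ V) → V = ⊥ ∨ V = ⊤)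
    (hineq : ∀ i j, i ≠ j →
      ¬ ∃ U : H i ≃ₗᵢ[ℂ] H j, ∀ (g : G) (ζ : H i), U (π i g ζ) = π j g (U ζ))
    (k : Fin n → ℝ) (hk : ∀ i, 0 < k i)
    (hsq : ∀ i, ∀ ζ θ : H i, MemLp (fun x => ⟪θ, π i x ζ⟫_ℂ) 2 μ)
    (horth : ∀ i, ∀ ζ ζ' θ θ' : H i,
      ∫ x, ⟪θ, π i x ζ⟫_ℂ * (starRingEnd ℂ) ⟪θ', π i x ζ'⟫_ℂ ∂μ =
        ((k i : ℂ))⁻¹ * ⟪ζ', ζ⟫_ℂ * ⟪θ, θ'⟫_ℂ)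
    (kσ : ℝ) (hkσ_le : ∀ i, kσ ≤ k i) (hkσ_mem : ∃ i, kσ = k i)
    (u : G → ℂ) (ξ η : ℕ → PiLp 2 H) (C : ℝ)
    (hsum : Summable fun j => ‖ξ j‖ * ‖η j‖)
    (hC : C = ∑' j, ‖ξ j‖ * ‖η j‖)
    (hu : ∀ x, u x = ∑' j, ∑ i, ⟪(η j) i, π i x ((ξ j) i)⟫_ℂ) :
    MemLp u 2 μ ∧ Real.sqrt kσ * (eLpNorm u 2 μ).toReal ≤ C := by
  clear hone hmul hcont hirr hineq hn
  have hkσ : 0 < kσ := by obtain ⟨i, hi⟩ := hkσ_mem; exact hi ▸ hk i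
  -- unitarity gives norm preservation
  have hnorm : ∀ i (x : G) (ζ : H i), ‖π i x ζ‖ = ‖ζ‖ := by
    intro i x ζ
    have h := hunitary i x ζ ζ
    rw [inner_self_eq_norm_sq_to_K, inner_self_eq_norm_sq_to_K] at h
    have h2 : (‖(π i x) ζ‖ : ℝ) ^ 2 = (‖ζ‖ : ℝ) ^ 2 := by exact_mod_cast h
    nlinarith [norm_nonneg ((π i x) ζ), norm_nonneg ζ]
  set f : ℕ → G → ℂ := fun j x => ∑ i, ⟪(η j) i, π i x ((ξ j) i)⟫_ℂ with hf
  -- pointwise bound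
  have hfb : ∀ j x, ‖f j x‖ ≤ ‖ξ j‖ * ‖η j‖ := by
    intro j x
    calc ‖f j x‖ ≤ ∑ i, ‖⟪(η j) i, π i x ((ξ j) i)⟫_ℂ‖ := norm_sum_le _ _
      _ ≤ ∑ i, ‖(ξ j) i‖ * ‖(η j) i‖ := by
          refine Finset.sum_le_sum fun i _ => ?_
          calc ‖⟪(η j) i, π i x ((ξ j) i)⟫_ℂ‖
              ≤ ‖(η j) i‖ * ‖π i x ((ξ j) i)‖ := norm_inner_le_norm _ _
            _ = ‖(ξ j) i‖ * ‖(η j) i‖ := by rw [hnorm]; ring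
      _ ≤ ‖ξ j‖ * ‖η j‖ := cs_aux _ _
  -- L² norm of a single coefficient function
  have hcoefnorm : ∀ i (ζ θ : H i),
      ‖((hsq i ζ θ).toLp _ : Lp ℂ 2 μ)‖ = Real.sqrt (k i)⁻¹ * (‖ζ‖ * ‖θ‖) := by
    intro i ζ θ
    set T : Lp ℂ 2 μ := (hsq i ζ θ).toLp _ with hT
    have hinner : ⟪T, T⟫_ℂ = ((k i : ℂ))⁻¹ * ⟪ζ, ζ⟫_ℂ * ⟪θ, θ⟫_ℂ := by
      rw [L2.inner_def, ← horth i ζ ζ θ θ]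
      refine integral_congr_ae ?_
      filter_upwards [MemLp.coeFn_toLp (hsq i ζ θ)] with x hx
      simp only [hT, hx, RCLike.inner_apply]
    have h2 := hinner
    rw [inner_self_eq_norm_sq_to_K (𝕜 := ℂ) T, inner_self_eq_norm_sq_to_K (𝕜 := ℂ) ζ,
      inner_self_eq_norm_sq_to_K (𝕜 := ℂ) θ] at h2
    have h3 : ‖T‖ ^ 2 = (k i)⁻¹ * ‖ζ‖ ^ 2 * ‖θ‖ ^ 2 := by
      norm_cast at h2
      exact RCLike.ofReal_injective (K := ℂ) (h2.trans (by push_cast; rfl))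
    have h3' : (k i)⁻¹ * (‖ζ‖ * ‖θ‖) ^ 2 = ‖T‖ ^ 2 := by rw [h3]; ring
    have h4 : ‖T‖ = Real.sqrt ((k i)⁻¹ * (‖ζ‖ * ‖θ‖) ^ 2) := by
      rw [h3']
      exact (Real.sqrt_sq (norm_nonneg T)).symm
    rw [h4, Real.sqrt_mul (inv_nonneg.mpr (hk i).le), Real.sqrt_sq (by positivity)]
  -- each f j is Memℒp, with norm bound
  have hfmem : ∀ j, MemLp (f j) 2 μ := fun j =>
    memLp_finsetSum Finset.univ fun i _ => hsq i _ _
  set Fc : ℕ → Lp ℂ 2 μ := fun j => (hfmem j).toLp (f j) with hFc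
  have hFcnorm : ∀ j, ‖Fc j‖ ≤ Real.sqrt kσ⁻¹ * (‖ξ j‖ * ‖η j‖) := by
    intro j
    have h1 : eLpNorm (f j) 2 μ ≤
        ∑ i, eLpNorm (fun x => ⟪(η j) i, π i x ((ξ j) i)⟫_ℂ) 2 μ := by
      have := eLpNorm_sum_le (f := fun i x => ⟪(η j) i, π i x ((ξ j) i)⟫_ℂ)
        (s := Finset.univ) (fun i _ => (hsq i _ _).1) one_le_two
      refine le_trans (le_of_eq ?_) this
      apply eLpNorm_congr_ae
      filter_upwards with x
      simp [hf]
    calc ‖Fc j‖ = (eLpNorm (f j) 2 μ).toReal := Lp.norm_toLp _ _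
      _ ≤ (∑ i, eLpNorm (fun x => ⟪(η j) i, π i x ((ξ j) i)⟫_ℂ) 2 μ).toReal := by
          refine ENNReal.toReal_mono ?_ h1
          exact (ENNReal.sum_lt_top.2 fun i _ => (hsq i _ _).2).ne
      _ = ∑ i, (eLpNorm (fun x => ⟪(η j) i, π i x ((ξ j) i)⟫_ℂ) 2 μ).toReal := by
          exact ENNReal.toReal_sum fun i _ => (hsq i _ _).2.ne
      _ = ∑ i, Real.sqrt (k i)⁻¹ * (‖(ξ j) i‖ * ‖(η j) i‖) := by
          refine Finset.sum_congr rfl fun i _ => ?_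
          rw [← Lp.norm_toLp _ (hsq i _ _), hcoefnorm]
      _ ≤ ∑ i, Real.sqrt kσ⁻¹ * (‖(ξ j) i‖ * ‖(η j) i‖) := by
          refine Finset.sum_le_sum fun i _ => ?_
          have : Real.sqrt (k i)⁻¹ ≤ Real.sqrt kσ⁻¹ :=
            Real.sqrt_le_sqrt (inv_anti₀ hkσ (hkσ_le i))
          exact mul_le_mul_of_nonneg_right this (by positivity)
      _ = Real.sqrt kσ⁻¹ * ∑ i, ‖(ξ j) i‖ * ‖(η j) i‖ := by rw [Finset.mul_sum]
      _ ≤ Real.sqrt kσ⁻¹ * (‖ξ j‖ * ‖η j‖) :=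
          mul_le_mul_of_nonneg_left (cs_aux _ _) (by positivity)
  -- summability in Lp
  have hFcsum : Summable Fc := by
    refine Summable.of_norm (Summable.of_nonneg_of_le (fun j => norm_nonneg _)
      hFcnorm ?_)
    exact hsum.mul_left _
  set F : Lp ℂ 2 μ := ∑' j, Fc j with hF
  have hFhas : HasSum Fc F := hFcsum.hasSum
  -- pointwise sums
  have hptws : ∀ x, HasSum (fun j => f j x) (u x) := by
    intro x
    have hs : Summable fun j => f j x := by
      refine Summable.of_norm (Summable.of_nonneg_of_le (fun j => norm_nonneg _)
        (fun j => hfb j x) hsum)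
    have := hs.hasSum
    rwa [show ∑' j, f j x = u x from (hu x).symm] at this
  -- identify u with F almost everywhere
  have hae : u =ᵐ[μ] F := by
    have htendsto : Filter.Tendsto (fun N => ∑ j ∈ Finset.range N, Fc j)
        Filter.atTop (nhds F) := hFhas.tendsto_sum_nat
    have him : TendstoInMeasure μ (fun N => ((∑ j ∈ Finset.range N, Fc j : Lp ℂ 2 μ) : G → ℂ))
        Filter.atTop F := tendstoInMeasure_of_tendsto_Lp htendsto
    obtain ⟨ns, hns_mono, hns⟩ := him.exists_seq_tendsto_ae
    -- coeFn of partial sums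
    have hcoe : ∀ N : ℕ, ((∑ j ∈ Finset.range N, Fc j : Lp ℂ 2 μ) : G → ℂ)
        =ᵐ[μ] fun x => ∑ j ∈ Finset.range N, f j x := by
      intro N
      induction N with
      | zero => simpa [Pi.zero_def] using Lp.coeFn_zero ℂ 2 μ
      | succ N ih =>
        rw [Finset.sum_range_succ]
        filter_upwards [Lp.coeFn_add (∑ j ∈ Finset.range N, Fc j) (Fc N), ih,
          MemLp.coeFn_toLp (hfmem N)] with x hx1 hx2 hx3
        rw [Finset.sum_range_succ]
        rw [hx1, Pi.add_apply, hx2]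
        simp only [hFc, hx3]
    have hcoeall : ∀ᵐ x ∂μ, ∀ N : ℕ,
        ((∑ j ∈ Finset.range N, Fc j : Lp ℂ 2 μ) : G → ℂ) x
          = ∑ j ∈ Finset.range N, f j x := by
      rw [MeasureTheory.ae_all_iff]
      exact hcoe
    filter_upwards [hns, hcoeall] with x hx1 hx2
    -- partial sums at ns tend both to F x and to u x
    have htends1 : Filter.Tendsto (fun m => ∑ j ∈ Finset.range (ns m), f j x)
        Filter.atTop (nhds (F x)) := by
      refine hx1.congr fun m => ?_
      exact hx2 (ns m)
    have htends2 : Filter.Tendsto (fun m => ∑ j ∈ Finset.range (ns m), f j x)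
        Filter.atTop (nhds (u x)) :=
      ((hptws x).tendsto_sum_nat).comp hns_mono.tendsto_atTop
    exact tendsto_nhds_unique htends2 htends1
  have humem : MemLp u 2 μ := (Lp.memLp F).ae_eq hae.symm
  refine ⟨humem, ?_⟩
  have hnormeq : (eLpNorm u 2 μ).toReal = ‖F‖ := by
    rw [Lp.norm_def, eLpNorm_congr_ae hae]
  rw [hnormeq]
  have hnormF : ‖F‖ ≤ Real.sqrt kσ⁻¹ * C := by
    have h1 : ‖F‖ ≤ ∑' j, ‖Fc j‖ :=
      norm_tsum_le_tsum_norm (Summable.of_nonneg_of_le (fun j => norm_nonneg _)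
        hFcnorm (hsum.mul_left _))
    have h2 : ∑' j, ‖Fc j‖ ≤ ∑' j, Real.sqrt kσ⁻¹ * (‖ξ j‖ * ‖η j‖) := by
      refine Summable.tsum_le_tsum hFcnorm
        (Summable.of_nonneg_of_le (fun j => norm_nonneg _) hFcnorm (hsum.mul_left _))
        (hsum.mul_left _)
    rw [tsum_mul_left, ← hC] at h2
    exact h1.trans h2
  calc Real.sqrt kσ * ‖F‖ ≤ Real.sqrt kσ * (Real.sqrt kσ⁻¹ * C) :=
        mul_le_mul_of_nonneg_left hnormF (Real.sqrt_nonneg _)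
    _ = C := by
        rw [← mul_assoc, ← Real.sqrt_mul hkσ.le, mul_inv_cancel₀ hkσ.ne', Real.sqrt_one, one_mul]
end
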